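/- arXiv:1302.5376 — 4 statements merged into one kernel-verified Lean document; each statement's English description precedes it below -/
import Mathlib

section
/- Bounded size of the distance-based CSIT allocation (Corollary 1): Let S ⊂ ℝ² be a finite set of points such that ‖s − s'‖ ≥ δ for all distinct s, s' ∈ S, for some δ > 0. Let γ < 1 and set d₀ := 1/(1−γ). Then for every j ∈ S, Σ_{k∈S} Σ_{i∈S} [1 + (γ−1)(‖j − k‖ + ‖k − i‖)]⁺ ≤ (2d₀/δ + 1)⁴, a bound independent of the cardinality of S. (The left-hand side equals lim_{P→∞} Σ_{k,i} B^{Dist,(j)}_{ki}/log₂(P), i.e., the size of the distance-based CSIT allocation B^{Dist,(j)}_{ki} = ⌈[1 + (γ−1)(‖j−k‖ + ‖k−i‖)]⁺ log₂(P)⌉ at TX j; in particular each summand with ‖j − k‖ ≥ d₀ vanishes, so TX j needs no CSIT relative to RXs farther than d₀.) -/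
/-!
Only pairs `(k, i)` with `‖j - k‖ ≤ d₀` and `‖k - i‖ ≤ d₀` contribute, each at most `1`. By a
volume argument, a `δ`-separated set within distance `d₀` of a point of the plane has at most
`(2d₀/δ + 1)²` points, since the disjoint balls of radius `δ/2` around them fit in a ball of
radius `d₀ + δ/2`. Bounding first the choices of `k`, then those of `i`, gives `(2d₀/δ + 1)⁴`.
-/

open MeasureTheory Metric Module

theorem Finset.card_le_of_forall_dist_le_of_separated {E : Type*} [NormedAddCommGroup E]
    [NormedSpace ℝ E] [FiniteDimensional ℝ E] (c : E) (T : Finset E) {δ R : ℝ} (hδ : 0 < δ)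
    (hR : 0 ≤ R) (hT : ∀ x ∈ T, dist c x ≤ R)
    (hsep : ∀ s ∈ T, ∀ s' ∈ T, s ≠ s' → δ ≤ dist s s') :
    (T.card : ℝ) ≤ (2 * R / δ + 1) ^ finrank ℝ E := by
  borelize E
  let μ : Measure E := Measure.addHaar
  have hδ2 : 0 < δ / 2 := half_pos hδ
  have hρ : 0 < R + δ / 2 := by linarith
  have hdisj : (T : Set E).PairwiseDisjoint fun x => ball x (δ / 2) := fun x hx y hy hxy =>
    ball_disjoint_ball <| by linarith [hsep x hx y hy hxy]
  have hsub : ⋃ x ∈ T, ball x (δ / 2) ⊆ ball c (R + δ / 2) := Set.iUnion₂_subset fun x hx =>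
    ball_subset_ball' <| by linarith [hT x hx, dist_comm c x]
  have hvol : (T.card : ENNReal) * ENNReal.ofReal ((δ / 2) ^ finrank ℝ E) * μ (ball 0 1) ≤
      ENNReal.ofReal ((R + δ / 2) ^ finrank ℝ E) * μ (ball 0 1) :=
    calc (T.card : ENNReal) * ENNReal.ofReal ((δ / 2) ^ finrank ℝ E) * μ (ball 0 1)
        = μ (⋃ x ∈ T, ball x (δ / 2)) := by
          rw [measure_biUnion_finset hdisj fun x _ => measurableSet_ball]
          simp only [μ.addHaar_ball_of_pos _ hδ2, Finset.sum_const, nsmul_eq_mul, mul_assoc]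
      _ ≤ μ (ball c (R + δ / 2)) := measure_mono hsub
      _ = ENNReal.ofReal ((R + δ / 2) ^ finrank ℝ E) * μ (ball 0 1) :=
          μ.addHaar_ball_of_pos _ hρ
  have hvol' := (ENNReal.mul_le_mul_iff_left (measure_ball_pos μ (0 : E) one_pos).ne'
    measure_ball_lt_top.ne).1 hvol
  rw [← ENNReal.ofReal_natCast, ← ENNReal.ofReal_mul (Nat.cast_nonneg _),
    ENNReal.ofReal_le_ofReal_iff (by positivity)] at hvol'
  have hratio : 2 * R / δ + 1 = (R + δ / 2) / (δ / 2) := by field_simp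
  rw [hratio, div_pow, le_div_iff₀ (by positivity)]
  exact hvol'

theorem max_one_add_mul_le_ite {γ x y : ℝ} (hγ : γ < 1) (hx : 0 ≤ x) (hy : 0 ≤ y) :
    max (1 + (γ - 1) * (x + y)) 0 ≤
      (if x ≤ 1 / (1 - γ) then 1 else 0) * (if y ≤ 1 / (1 - γ) then 1 else 0) := by
  have h1γ : 0 < 1 - γ := sub_pos.2 hγ
  split_ifs with hxd hyd hyd <;> simp only [mul_one, mul_zero]
  · exact max_le (by nlinarith [mul_nonneg h1γ.le (add_nonneg hx hy)]) zero_le_one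
  all_goals
    refine max_le ?_ le_rfl
    rw [not_le, div_lt_iff₀ h1γ] at *
    nlinarith

theorem bounded_size_of_distance_based_CSIT_general
    (S : Finset (EuclideanSpace ℝ (Fin 2))) (δ : ℝ) (hδ : 0 < δ)
    (hsep : ∀ s ∈ S, ∀ s' ∈ S, s ≠ s' → δ ≤ dist s s')
    (γ : ℝ) (hγ : γ < 1) (j : EuclideanSpace ℝ (Fin 2)) :
    ∑ k ∈ S, ∑ i ∈ S, max (1 + (γ - 1) * (dist j k + dist k i)) 0 ≤
      (2 * (1 / (1 - γ)) / δ + 1) ^ 4 := by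
  set d := 1 / (1 - γ)
  set M := (2 * d / δ + 1) ^ 2
  have hM : 0 ≤ M := sq_nonneg _
  have hnear : ∀ c, ∑ x ∈ S, (if dist c x ≤ d then (1 : ℝ) else 0) ≤ M := fun c => by
    have := (S.filter (dist c · ≤ d)).card_le_of_forall_dist_le_of_separated c hδ
      (one_div_nonneg.2 (sub_pos.2 hγ).le) (fun x hx => (Finset.mem_filter.1 hx).2)
      fun s hs s' hs' => hsep s (Finset.mem_filter.1 hs).1 s' (Finset.mem_filter.1 hs').1
    rwa [finrank_euclideanSpace_fin, ← Finset.sum_boole] at this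
  calc ∑ k ∈ S, ∑ i ∈ S, max (1 + (γ - 1) * (dist j k + dist k i)) 0
      ≤ ∑ k ∈ S, (if dist j k ≤ d then 1 else 0) *
          ∑ i ∈ S, (if dist k i ≤ d then 1 else 0) := by
        simp only [Finset.mul_sum]
        gcongr with k _ i _
        exact max_one_add_mul_le_ite hγ dist_nonneg dist_nonneg
    _ ≤ ∑ k ∈ S, (if dist j k ≤ d then 1 else 0) * M := by
        gcongr with k _
        exact hnear k
    _ ≤ M * M := by rw [← Finset.sum_mul]; exact mul_le_mul_of_nonneg_right (hnear j) hM
    _ = (2 * d / δ + 1) ^ 4 := by ring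

/-- **Corollary 1.** For a planar set `S` of TX/RX positions with minimum
separation `δ > 0` and pathloss parameter `γ < 1`, the size of the distance-based
CSIT allocation at any TX `j ∈ S`, namely
`Σ_{k∈S} Σ_{i∈S} [1 + (γ-1)(‖j-k‖ + ‖k-i‖)]⁺`, is at most `(2·d₀/δ + 1)⁴` with
`d₀ = 1/(1-γ)` — a bound independent of the cardinality of `S`. -/
theorem bounded_size_of_distance_based_CSIT
    (S : Finset (EuclideanSpace ℝ (Fin 2))) (δ : ℝ) (hδ : 0 < δ)
    (hsep : ∀ s ∈ S, ∀ s' ∈ S, s ≠ s' → δ ≤ dist s s')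
    (γ : ℝ) (hγ : γ < 1) (j : EuclideanSpace ℝ (Fin 2)) (hj : j ∈ S) :
    ∑ k ∈ S, ∑ i ∈ S, max (1 + (γ - 1) * (dist j k + dist k i)) 0 ≤
      (2 * (1 / (1 - γ)) / δ + 1) ^ 4 :=
  bounded_size_of_distance_based_CSIT_general S δ hδ hsep γ hγ j
end

section
/- Zero-forcing leakage bound (key deterministic step in the proof of Proposition 1): Let K ≥ 1, let h, t_1, …, t_K, t_1*, …, t_K* ∈ ℂ^K, and let i ∈ {1,…,K}. Assume h^H t_j* = 0 for every j ≠ i. Then log₂(1 + Σ_{j≠i} |h^H t_j|²) ≤ log₂(1 + Σ_{j=1}^K ‖t_j − t_j*‖²) + log₂(1 + ‖h‖²). -/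
/-!
The zero-forcing condition lets us replace `⟪h, t j⟫` by `⟪h, t j - t⋆ j⟫` for `j ≠ i`, so by
Cauchy–Schwarz the leakage is at most `‖h‖² · Σ_j ‖t j - t⋆ j‖²`; and `1 + ab ≤ (1 + a)(1 + b)`
for `a, b ≥ 0` turns this product into a sum of logarithms.
-/

open scoped InnerProductSpace

section ZeroForcing

variable {𝕜 E : Type*} [RCLike 𝕜] [NormedAddCommGroup E] [InnerProductSpace 𝕜 E]

theorem norm_inner_le_mul_norm_sub_of_inner_eq_zero {h t s : E} (hs : ⟪h, s⟫_𝕜 = 0) :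
    ‖⟪h, t⟫_𝕜‖ ≤ ‖h‖ * ‖t - s‖ := by
  have hts : ⟪h, t⟫_𝕜 = ⟪h, t - s⟫_𝕜 := by rw [inner_sub_right, hs, sub_zero]
  exact hts ▸ norm_inner_le_norm h (t - s)

theorem sum_norm_inner_sq_le_of_inner_eq_zero {ι : Type*} (s : Finset ι) (h : E)
    (t tstar : ι → E) (hzf : ∀ j ∈ s, ⟪h, tstar j⟫_𝕜 = 0) :
    ∑ j ∈ s, ‖⟪h, t j⟫_𝕜‖ ^ 2 ≤ ‖h‖ ^ 2 * ∑ j ∈ s, ‖t j - tstar j‖ ^ 2 := by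
  rw [Finset.mul_sum]
  refine Finset.sum_le_sum fun j hj => ?_
  rw [← mul_pow]
  gcongr
  exact norm_inner_le_mul_norm_sub_of_inner_eq_zero (hzf j hj)

end ZeroForcing

theorem Real.logb_one_add_le_add_of_le_mul {b x u v : ℝ} (hb : 1 < b) (hx : 0 ≤ x)
    (hu : 0 ≤ u) (hv : 0 ≤ v) (hxuv : x ≤ u * v) :
    Real.logb b (1 + x) ≤ Real.logb b (1 + u) + Real.logb b (1 + v) := by
  rw [← Real.logb_mul (by positivity) (by positivity)]
  exact Real.logb_le_logb_of_le hb (by positivity) (by nlinarith)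

theorem zero_forcing_leakage_bound_general
    (K : ℕ) (h : EuclideanSpace ℂ (Fin K))
    (t tstar : Fin K → EuclideanSpace ℂ (Fin K)) (i : Fin K)
    (hzf : ∀ j : Fin K, j ≠ i → ⟪h, tstar j⟫_ℂ = 0) :
    Real.logb 2 (1 + ∑ j ∈ Finset.univ.erase i, ‖⟪h, t j⟫_ℂ‖ ^ 2) ≤
      Real.logb 2 (1 + ∑ j : Fin K, ‖t j - tstar j‖ ^ 2) +
        Real.logb 2 (1 + ‖h‖ ^ 2) := by
  have hleak := sum_norm_inner_sq_le_of_inner_eq_zero (Finset.univ.erase i) h t tstar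
    fun j hj => hzf j (Finset.ne_of_mem_erase hj)
  have herase : ∑ j ∈ Finset.univ.erase i, ‖t j - tstar j‖ ^ 2 ≤ ∑ j, ‖t j - tstar j‖ ^ 2 :=
    Finset.sum_le_sum_of_subset_of_nonneg (Finset.erase_subset _ _) fun _ _ _ => by positivity
  refine Real.logb_one_add_le_add_of_le_mul one_lt_two (by positivity) (by positivity)
    (by positivity) ?_
  calc _ ≤ ‖h‖ ^ 2 * ∑ j ∈ Finset.univ.erase i, ‖t j - tstar j‖ ^ 2 := hleak
    _ ≤ ‖h‖ ^ 2 * ∑ j, ‖t j - tstar j‖ ^ 2 := mul_le_mul_of_nonneg_left herase (by positivity)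
    _ = _ := mul_comm _ _

/-- If the beamformers `t_j*` are zero-forcing for the channel row `h` of user `i`
(`h^H t_j* = 0` for `j ≠ i`), then the interference leakage of the beamformers `t_j`
satisfies `log₂(1 + Σ_{j≠i} |h^H t_j|²) ≤ log₂(1 + Σ_j ‖t_j - t_j*‖²) + log₂(1 + ‖h‖²)`. -/
theorem zero_forcing_leakage_bound
    (K : ℕ) (hK : 1 ≤ K) (h : EuclideanSpace ℂ (Fin K))
    (t tstar : Fin K → EuclideanSpace ℂ (Fin K)) (i : Fin K)
    (hzf : ∀ j : Fin K, j ≠ i → ⟪h, tstar j⟫_ℂ = 0) :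
    Real.logb 2 (1 + ∑ j ∈ Finset.univ.erase i, ‖⟪h, t j⟫_ℂ‖ ^ 2) ≤
      Real.logb 2 (1 + ∑ j : Fin K, ‖t j - tstar j‖ ^ 2) +
        Real.logb 2 (1 + ‖h‖ ^ 2) :=
  zero_forcing_leakage_bound_general K h t tstar i hzf
end

section
/- Path bound on the Neumann-series terms of the channel inverse: Let K ≥ 2, let X be a metric space with distance d, and let p : {1,…,K} → X be injective; set δ := min_{k≠i} d(p_k, p_i) > 0. Let μ ∈ (0,1), M > 0, m > 0, and let H ∈ ℂ^{K×K} satisfy |H_{ki}| ≤ M μ^{d(p_k,p_i)} for all k ≠ i and |H_{ii}| ≥ m for all i. Let D be the diagonal matrix with the same diagonal as H. Then for every n ≥ 1 and all j, i ∈ {1,…,K}: |( (D^{−1}(D − H))^n D^{−1} )_{ji}| ≤ K^{n−1} (M/m)^n (1/m) · μ^{max(d(p_j,p_i), nδ)}. -/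
/-!
Write `A = D⁻¹(D - H)`. Its diagonal vanishes and `‖A k i‖ ≤ (M/m) μ^{d(p_k,p_i)}` off it, so
every entry obeys `‖A k i‖ ≤ (M/m) μ^{max(d(p_k,p_i), δ)}`. Multiplying by `A` once more adds one
step to each path: the triangle inequality and `μ ≤ 1` turn the product of the weights into
`μ^{max(d(p_j,p_i), (n+1)δ)}`, while summing over the intermediate index costs a factor `K`.
-/

open Matrix

theorem Real.rpow_max_mul_rpow_max_le {μ a b c s t : ℝ} (hμ0 : 0 < μ) (hμ1 : μ ≤ 1)
    (hc : c ≤ a + b) :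
    μ ^ max a s * μ ^ max b t ≤ μ ^ max c (s + t) := by
  rw [← Real.rpow_add hμ0]
  refine Real.rpow_le_rpow_of_exponent_ge hμ0 hμ1 (max_le ?_ ?_)
  · linarith [le_max_left a s, le_max_left b t]
  · linarith [le_max_right a s, le_max_right b t]

section PathBound

variable {ι 𝕜 X : Type*} [Fintype ι] [NormedRing 𝕜] [PseudoMetricSpace X]
  {p : ι → X} {μ δ : ℝ}

theorem Matrix.norm_mul_apply_le_of_decay {A B : Matrix ι ι 𝕜} {a b s : ℝ}
    (hμ0 : 0 < μ) (hμ1 : μ ≤ 1) (ha : 0 ≤ a) (hb : 0 ≤ b)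
    (hA : ∀ j k, ‖A j k‖ ≤ a * μ ^ max (dist (p j) (p k)) s)
    (hB : ∀ k i, ‖B k i‖ ≤ b * μ ^ max (dist (p k) (p i)) δ) (j i : ι) :
    ‖(A * B) j i‖ ≤ Fintype.card ι * (a * b) * μ ^ max (dist (p j) (p i)) (s + δ) := by
  calc ‖(A * B) j i‖ ≤ ∑ k, ‖A j k‖ * ‖B k i‖ :=
        (norm_sum_le _ _).trans (Finset.sum_le_sum fun k _ => norm_mul_le _ _)
    _ ≤ ∑ _k : ι, a * b * μ ^ max (dist (p j) (p i)) (s + δ) := by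
        refine Finset.sum_le_sum fun k _ => ?_
        calc ‖A j k‖ * ‖B k i‖
            ≤ (a * μ ^ max (dist (p j) (p k)) s) * (b * μ ^ max (dist (p k) (p i)) δ) :=
              mul_le_mul (hA j k) (hB k i) (norm_nonneg _) (by positivity)
          _ = a * b * (μ ^ max (dist (p j) (p k)) s * μ ^ max (dist (p k) (p i)) δ) := by ring
          _ ≤ a * b * μ ^ max (dist (p j) (p i)) (s + δ) :=
              mul_le_mul_of_nonneg_left
                (Real.rpow_max_mul_rpow_max_le hμ0 hμ1 (dist_triangle _ _ _)) (by positivity)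
    _ = Fintype.card ι * (a * b) * μ ^ max (dist (p j) (p i)) (s + δ) := by
        rw [Finset.sum_const, Finset.card_univ, nsmul_eq_mul]
        ring

theorem Matrix.norm_pow_succ_apply_le_of_decay [DecidableEq ι] {A : Matrix ι ι 𝕜} {c : ℝ}
    (hμ0 : 0 < μ) (hμ1 : μ ≤ 1) (hc : 0 ≤ c)
    (hA : ∀ k i, ‖A k i‖ ≤ c * μ ^ max (dist (p k) (p i)) δ) (n : ℕ) (j i : ι) :
    ‖(A ^ (n + 1)) j i‖ ≤
      (Fintype.card ι : ℝ) ^ n * c ^ (n + 1) * μ ^ max (dist (p j) (p i)) ((n + 1) * δ) := by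
  induction n generalizing j i with
  | zero => simpa using hA j i
  | succ n ih =>
    have := norm_mul_apply_le_of_decay hμ0 hμ1 (by positivity) hc ih hA j i
    rw [pow_succ A (n + 1)]
    convert this using 2
    · ring
    · push_cast
      ring

end PathBound

theorem Matrix.inv_diagonal_of_ne_zero {ι 𝕜 : Type*} [Fintype ι] [DecidableEq ι] [Field 𝕜]
    {v : ι → 𝕜} (hv : ∀ i, v i ≠ 0) : (diagonal v)⁻¹ = diagonal fun i => (v i)⁻¹ :=
  inv_eq_left_inv <| by
    rw [diagonal_mul_diagonal, ← diagonal_one]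
    exact congrArg diagonal (funext fun i => inv_mul_cancel₀ (hv i))

theorem Matrix.norm_inv_diagonal_mul_sub_apply_le {ι 𝕜 X : Type*} [Fintype ι] [DecidableEq ι]
    [NormedField 𝕜] [PseudoMetricSpace X] {p : ι → X} {δ μ M m : ℝ}
    (hsep : ∀ k i, k ≠ i → δ ≤ dist (p k) (p i)) (hμ0 : 0 < μ) (hM : 0 ≤ M) (hm : 0 < m)
    {H : Matrix ι ι 𝕜} (hoff : ∀ k i, k ≠ i → ‖H k i‖ ≤ M * μ ^ dist (p k) (p i))
    (hdiag : ∀ i, m ≤ ‖H i i‖) (k i : ι) :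
    ‖(diagonal (fun i => (H i i)⁻¹) * (diagonal (fun i => H i i) - H)) k i‖ ≤
      M / m * μ ^ max (dist (p k) (p i)) δ := by
  rw [diagonal_mul, sub_apply]
  by_cases hki : k = i
  · subst hki
    simp only [diagonal_apply_eq, sub_self, mul_zero, norm_zero]
    positivity
  · rw [diagonal_apply_ne _ hki, max_eq_left (hsep k i hki), zero_sub, mul_neg, norm_neg,
      norm_mul, norm_inv, div_eq_inv_mul, mul_assoc]
    exact mul_le_mul (inv_anti₀ hm (hdiag k)) (hoff k i hki) (norm_nonneg _)
      (inv_nonneg.2 hm.le)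

theorem path_bound_neumann_terms_general
    (K : ℕ) {X : Type*} [MetricSpace X]
    (p : Fin K → X)
    (δ : ℝ)
    (hδmin : ∀ k i : Fin K, k ≠ i → δ ≤ dist (p k) (p i))
    (μ : ℝ) (hμ0 : 0 < μ) (hμ1 : μ < 1) (M m : ℝ) (hM : 0 < M) (hm : 0 < m)
    (H : Matrix (Fin K) (Fin K) ℂ)
    (hoff : ∀ k i : Fin K, k ≠ i → ‖H k i‖ ≤ M * μ ^ dist (p k) (p i))
    (hdiag : ∀ i : Fin K, m ≤ ‖H i i‖)
    (D : Matrix (Fin K) (Fin K) ℂ) (hD : D = Matrix.diagonal fun i => H i i)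
    (n : ℕ) (hn : 1 ≤ n) (j i : Fin K) :
    ‖((D⁻¹ * (D - H)) ^ n * D⁻¹) j i‖ ≤
      (K : ℝ) ^ (n - 1) * (M / m) ^ n * (1 / m) *
        μ ^ max (dist (p j) (p i)) (n * δ) := by
  obtain ⟨n, rfl⟩ := Nat.exists_eq_add_of_le' hn
  have hH : ∀ i, H i i ≠ 0 := fun i => norm_pos_iff.1 (hm.trans_le (hdiag i))
  rw [hD, inv_diagonal_of_ne_zero hH, mul_diagonal, norm_mul, Nat.add_sub_cancel, norm_inv]
  have hA := norm_pow_succ_apply_le_of_decay hμ0 hμ1.le (div_nonneg hM.le hm.le)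
    (norm_inv_diagonal_mul_sub_apply_le hδmin hμ0 hM.le hm hoff hdiag) n j i
  rw [Fintype.card_fin] at hA
  have hHinv : ‖H i i‖⁻¹ ≤ 1 / m := one_div m ▸ inv_anti₀ hm (hdiag i)
  calc _ ≤ (K : ℝ) ^ n * (M / m) ^ (n + 1) * μ ^ max (dist (p j) (p i)) ((n + 1) * δ) * (1 / m) :=
        mul_le_mul hA hHinv (by positivity) (by positivity)
    _ = _ := by push_cast; ring

/-- Path bound on the terms of the Neumann expansion of the inverse of a channel
matrix with geometrically decaying off-diagonal entries: for all `n ≥ 1` and `j, i`,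
`|((D⁻¹(D-H))ⁿ D⁻¹)_{ji}| ≤ K^{n-1} (M/m)ⁿ (1/m) μ^{max(d(p_j,p_i), nδ)}`. -/
theorem path_bound_neumann_terms
    (K : ℕ) (hK : 2 ≤ K) {X : Type*} [MetricSpace X]
    (p : Fin K → X) (hp : Function.Injective p)
    (δ : ℝ) (hδpos : 0 < δ)
    (hδmin : ∀ k i : Fin K, k ≠ i → δ ≤ dist (p k) (p i))
    (μ : ℝ) (hμ0 : 0 < μ) (hμ1 : μ < 1) (M m : ℝ) (hM : 0 < M) (hm : 0 < m)
    (H : Matrix (Fin K) (Fin K) ℂ)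
    (hoff : ∀ k i : Fin K, k ≠ i → ‖H k i‖ ≤ M * μ ^ dist (p k) (p i))
    (hdiag : ∀ i : Fin K, m ≤ ‖H i i‖)
    (D : Matrix (Fin K) (Fin K) ℂ) (hD : D = Matrix.diagonal fun i => H i i)
    (n : ℕ) (hn : 1 ≤ n) (j i : Fin K) :
    ‖((D⁻¹ * (D - H)) ^ n * D⁻¹) j i‖ ≤
      (K : ℝ) ^ (n - 1) * (M / m) ^ n * (1 / m) *
        μ ^ max (dist (p j) (p i)) (n * δ) :=
  path_bound_neumann_terms_general K p δ hδmin μ hμ0 hμ1 M m hM hm H hoff hdiag D hD n hn j i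
end

section
/- Exponential off-diagonal decay of the inverse channel matrix: Let K ≥ 2, let X be a metric space with distance d, and let p : {1,…,K} → X be injective; set δ := min_{k≠i} d(p_k, p_i) > 0. Let μ ∈ (0,1), M > 0, m > 0, and let H ∈ ℂ^{K×K} satisfy |H_{ki}| ≤ M μ^{d(p_k,p_i)} for all k ≠ i and |H_{ii}| ≥ m for all i. If q := K (M/m) μ^{δ/2} < 1, then H is invertible and for all j ≠ i: |(H^{−1})_{ji}| ≤ (M / (m²(1−q))) · μ^{(d(p_j,p_i) + δ)/2}. In particular, the entries of H^{−1} decay exponentially in the distance between the corresponding TX and RX. -/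
/-!
Write `H = D (1 - F)` with `D` the diagonal of `H`, so that `|F_{ji}| ≤ c w_{ji}` for the weight
`w_{ji} = μ^{d(p_j,p_i)/2}` and `c = (M/m) μ^{δ/2}`; the triangle inequality makes `w`
submultiplicative, `w_{jk} w_{ki} ≤ w_{ji}`. Row dominance of `1 - F` gives invertibility. For
the decay, `T = (1 - F)⁻¹ - 1` solves `T = F + F T`; if `t` is the best constant in
`|T_{ji}| ≤ t w_{ji}`, then submultiplicativity turns this equation into `t ≤ c + K c t`, i.e.
`t ≤ c / (1 - q)`.
-/

open Matrix Finset

namespace Matrix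

variable {ι : Type*} [Fintype ι] {w : ι → ι → ℝ}

theorem norm_mul_apply_le_of_submultiplicative {R : Type*} [SeminormedRing R]
    (hw : ∀ j k i, w j k * w k i ≤ w j i) {A B : Matrix ι ι R} {a b : ℝ} (ha : 0 ≤ a)
    (hb : 0 ≤ b) (hA : ∀ j k, ‖A j k‖ ≤ a * w j k) (hB : ∀ k i, ‖B k i‖ ≤ b * w k i) (j i : ι) :
    ‖(A * B) j i‖ ≤ Fintype.card ι * a * b * w j i := by
  have hterm : ∀ k, ‖A j k‖ * ‖B k i‖ ≤ a * b * w j i := fun k =>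
    calc ‖A j k‖ * ‖B k i‖ ≤ (a * w j k) * (b * w k i) :=
          mul_le_mul (hA j k) (hB k i) (norm_nonneg _) ((norm_nonneg _).trans (hA j k))
      _ = a * b * (w j k * w k i) := by ring
      _ ≤ a * b * w j i := mul_le_mul_of_nonneg_left (hw j k i) (mul_nonneg ha hb)
  calc ‖(A * B) j i‖ ≤ ∑ k, ‖A j k‖ * ‖B k i‖ :=
        (norm_sum_le _ _).trans (sum_le_sum fun k _ => norm_mul_le _ _)
    _ ≤ ∑ _k : ι, a * b * w j i := sum_le_sum fun k _ => hterm k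
    _ = Fintype.card ι * a * b * w j i := by rw [sum_const, card_univ, nsmul_eq_mul]; ring

theorem norm_apply_le_of_eq_add_mul {R : Type*} [SeminormedRing R]
    (hw_pos : ∀ j i, 0 < w j i) (hw : ∀ j k i, w j k * w k i ≤ w j i)
    {F T : Matrix ι ι R} {c : ℝ} (hc : 0 ≤ c) (hF : ∀ j i, ‖F j i‖ ≤ c * w j i)
    (hq : Fintype.card ι * c < 1) (hT : T = F + F * T) (j i : ι) :
    ‖T j i‖ ≤ c / (1 - Fintype.card ι * c) * w j i := by
  have : Nonempty ι := ⟨j⟩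
  obtain ⟨⟨j₀, i₀⟩, hmax⟩ := Finite.exists_max fun x : ι × ι => ‖T x.1 x.2‖ / w x.1 x.2
  set t := ‖T j₀ i₀‖ / w j₀ i₀
  have ht0 : 0 ≤ t := div_nonneg (norm_nonneg _) (hw_pos j₀ i₀).le
  have hTt : ∀ k l, ‖T k l‖ ≤ t * w k l := fun k l =>
    (div_le_iff₀ (hw_pos k l)).mp (hmax (k, l))
  have hrec : ∀ k l, ‖T k l‖ ≤ (c + Fintype.card ι * c * t) * w k l := fun k l =>
    calc ‖T k l‖ = ‖F k l + (F * T) k l‖ := by rw [← add_apply, ← hT]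
      _ ≤ ‖F k l‖ + ‖(F * T) k l‖ := norm_add_le _ _
      _ ≤ c * w k l + Fintype.card ι * c * t * w k l :=
        add_le_add (hF k l) (norm_mul_apply_le_of_submultiplicative hw hc ht0 hF hTt k l)
      _ = (c + Fintype.card ι * c * t) * w k l := by ring
  have ht : t ≤ c / (1 - Fintype.card ι * c) := by
    have := (div_le_iff₀ (hw_pos j₀ i₀)).mpr (hrec j₀ i₀)
    rw [le_div_iff₀ (by linarith)]
    linarith
  exact (hTt j i).trans (mul_le_mul_of_nonneg_right ht (hw_pos j i).le)

theorem norm_apply_le_of_one_sub_mul_eq_one {R : Type*} [SeminormedRing R] [DecidableEq ι]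
    (hw_pos : ∀ j i, 0 < w j i) (hw : ∀ j k i, w j k * w k i ≤ w j i)
    {F P : Matrix ι ι R} {c : ℝ} (hc : 0 ≤ c) (hF : ∀ j i, ‖F j i‖ ≤ c * w j i)
    (hq : Fintype.card ι * c < 1) (hP : (1 - F) * P = 1) {j i : ι} (hji : j ≠ i) :
    ‖P j i‖ ≤ c / (1 - Fintype.card ι * c) * w j i := by
  have hT : P - 1 = F + F * (P - 1) :=
    calc P - 1 = P - (1 - F) * P := by rw [hP]
      _ = F + F * (P - 1) := by noncomm_ring
  simpa [one_apply_ne hji] using norm_apply_le_of_eq_add_mul hw_pos hw hc hF hq hT j i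

theorem det_one_sub_ne_zero_of_norm_le {K : Type*} [NormedField K] [DecidableEq ι]
    {F : Matrix ι ι K} {c : ℝ} (hF : ∀ j i, ‖F j i‖ ≤ c) (hq : Fintype.card ι * c < 1) :
    (1 - F).det ≠ 0 := by
  refine det_ne_zero_of_sum_row_lt_diag fun k => ?_
  have hrow : ‖F k k‖ + ∑ j ∈ univ.erase k, ‖F k j‖ ≤ Fintype.card ι * c := by
    rw [add_sum_erase univ (fun j => ‖F k j‖) (mem_univ k)]
    simpa using sum_le_sum fun j (_ : j ∈ univ) => hF k j
  have hdiag : 1 - ‖F k k‖ ≤ ‖(1 - F) k k‖ := by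
    simpa using norm_sub_norm_le (1 : K) (F k k)
  have hoff : ∑ j ∈ univ.erase k, ‖(1 - F) k j‖ = ∑ j ∈ univ.erase k, ‖F k j‖ :=
    sum_congr rfl fun j hj => by simp [one_apply_ne (ne_of_mem_erase hj).symm]
  linarith

theorem isUnit_det_and_norm_inv_apply_le {K : Type*} [NormedField K] [DecidableEq ι]
    (hw_pos : ∀ j i, 0 < w j i) (hw_le_one : ∀ j i, w j i ≤ 1)
    (hw : ∀ j k i, w j k * w k i ≤ w j i) {H : Matrix ι ι K} {m c : ℝ} (hm : 0 < m)
    (hc : 0 ≤ c) (hdiag : ∀ i, m ≤ ‖H i i‖) (hoff : ∀ j i, j ≠ i → ‖H j i‖ ≤ m * c * w j i)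
    (hq : Fintype.card ι * c < 1) :
    IsUnit H.det ∧ ∀ j i, j ≠ i →
      ‖H⁻¹ j i‖ ≤ c / ((1 - Fintype.card ι * c) * m) * w j i := by
  have hH0 : ∀ i, H i i ≠ 0 := fun i => norm_pos_iff.mp (hm.trans_le (hdiag i))
  set F := 1 - diagonal (fun k => (H k k)⁻¹) * H
  have hF : ∀ j i, ‖F j i‖ ≤ c * w j i := by
    intro j i
    rcases eq_or_ne j i with rfl | hji
    · simpa [F, hH0 j] using mul_nonneg hc (hw_pos j j).le
    · calc ‖F j i‖ = ‖H j i‖ / ‖H j j‖ := by simp [F, one_apply_ne hji, div_eq_inv_mul]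
        _ ≤ m * c * w j i / m :=
          div_le_div₀ ((norm_nonneg _).trans (hoff j i hji)) (hoff j i hji) hm (hdiag j)
        _ = c * w j i := by field_simp
  have hDH : 1 - F = diagonal (fun k => (H k k)⁻¹) * H := sub_sub_cancel _ _
  have hdet : IsUnit H.det := by
    have h := det_one_sub_ne_zero_of_norm_le
      (fun j i => (hF j i).trans (mul_le_of_le_one_right hc (hw_le_one j i))) hq
    rw [hDH, det_mul] at h
    exact isUnit_iff_ne_zero.mpr (right_ne_zero_of_mul h)
  refine ⟨hdet, fun j i hji => ?_⟩
  have hP : (1 - F) * (H⁻¹ * diagonal fun k => H k k) = 1 := by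
    rw [hDH, mul_assoc, ← mul_assoc H, mul_nonsing_inv H hdet, one_mul, diagonal_mul_diagonal]
    exact diagonal_eq_one.mpr (funext fun k => inv_mul_cancel₀ (hH0 k))
  have h := norm_apply_le_of_one_sub_mul_eq_one hw_pos hw hc hF hq hP hji
  rw [mul_diagonal, norm_mul, ← le_div_iff₀ (hm.trans_le (hdiag i))] at h
  calc ‖H⁻¹ j i‖ ≤ c / (1 - Fintype.card ι * c) * w j i / ‖H i i‖ := h
    _ ≤ c / (1 - Fintype.card ι * c) * w j i / m :=
      div_le_div_of_nonneg_left
        (mul_nonneg (div_nonneg hc (by linarith)) (hw_pos j i).le) hm (hdiag i)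
    _ = c / ((1 - Fintype.card ι * c) * m) * w j i := by rw [mul_comm _ m, ← div_div]; ring

end Matrix

theorem exponential_offdiagonal_decay_of_inverse_general
    (K : ℕ) {X : Type*} [MetricSpace X]
    (p : Fin K → X)
    (δ : ℝ)
    (hδmin : ∀ k i : Fin K, k ≠ i → δ ≤ dist (p k) (p i))
    (μ : ℝ) (hμ0 : 0 < μ) (hμ1 : μ < 1) (M m : ℝ) (hM : 0 < M) (hm : 0 < m)
    (H : Matrix (Fin K) (Fin K) ℂ)
    (hoff : ∀ k i : Fin K, k ≠ i → ‖H k i‖ ≤ M * μ ^ dist (p k) (p i))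
    (hdiag : ∀ i : Fin K, m ≤ ‖H i i‖)
    (q : ℝ) (hq : q = (K : ℝ) * (M / m) * μ ^ (δ / 2)) (hq1 : q < 1) :
    IsUnit H.det ∧
      ∀ j i : Fin K, j ≠ i →
        ‖H⁻¹ j i‖ ≤
          M / (m ^ 2 * (1 - q)) * μ ^ ((dist (p j) (p i) + δ) / 2) := by
  have hqc : Fintype.card (Fin K) * (M / m * μ ^ (δ / 2)) = q := by
    rw [Fintype.card_fin, hq, mul_assoc]
  have hw : ∀ j k i, μ ^ (dist (p j) (p k) / 2) * μ ^ (dist (p k) (p i) / 2) ≤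
      μ ^ (dist (p j) (p i) / 2) := fun j k i => by
    rw [← Real.rpow_add hμ0]
    exact Real.rpow_le_rpow_of_exponent_ge hμ0 hμ1.le
      (by linarith [dist_triangle (p j) (p k) (p i)])
  have hoff' : ∀ j i, j ≠ i →
      ‖H j i‖ ≤ m * (M / m * μ ^ (δ / 2)) * μ ^ (dist (p j) (p i) / 2) := fun j i hji =>
    calc ‖H j i‖ ≤ M * μ ^ dist (p j) (p i) := hoff j i hji
      _ ≤ M * μ ^ (δ / 2 + dist (p j) (p i) / 2) := mul_le_mul_of_nonneg_left
          (Real.rpow_le_rpow_of_exponent_ge hμ0 hμ1.le (by linarith [hδmin j i hji])) hM.le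
      _ = m * (M / m * μ ^ (δ / 2)) * μ ^ (dist (p j) (p i) / 2) := by
          rw [Real.rpow_add hμ0]; field_simp
  obtain ⟨hdet, hdecay⟩ := Matrix.isUnit_det_and_norm_inv_apply_le
    (fun j i => Real.rpow_pos_of_pos hμ0 _)
    (fun j i => Real.rpow_le_one hμ0.le hμ1.le (by positivity)) hw hm (by positivity) hdiag
    hoff' (hqc ▸ hq1)
  refine ⟨hdet, fun j i hji => (hdecay j i hji).trans_eq ?_⟩
  rw [hqc, add_div, Real.rpow_add hμ0]
  field_simp

/-- A channel matrix with geometrically decaying off-diagonal entries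
(`|H_{ki}| ≤ M μ^{d(p_k,p_i)}`, `|H_{ii}| ≥ m`) between `δ`-separated nodes is
invertible as soon as `q = K (M/m) μ^{δ/2} < 1`, and its inverse has exponentially
decaying off-diagonal entries:
`|(H⁻¹)_{ji}| ≤ (M/(m²(1-q))) μ^{(d(p_j,p_i)+δ)/2}` for `j ≠ i`. -/
theorem exponential_offdiagonal_decay_of_inverse
    (K : ℕ) (hK : 2 ≤ K) {X : Type*} [MetricSpace X]
    (p : Fin K → X) (hp : Function.Injective p)
    (δ : ℝ) (hδpos : 0 < δ)
    (hδmin : ∀ k i : Fin K, k ≠ i → δ ≤ dist (p k) (p i))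
    (μ : ℝ) (hμ0 : 0 < μ) (hμ1 : μ < 1) (M m : ℝ) (hM : 0 < M) (hm : 0 < m)
    (H : Matrix (Fin K) (Fin K) ℂ)
    (hoff : ∀ k i : Fin K, k ≠ i → ‖H k i‖ ≤ M * μ ^ dist (p k) (p i))
    (hdiag : ∀ i : Fin K, m ≤ ‖H i i‖)
    (q : ℝ) (hq : q = (K : ℝ) * (M / m) * μ ^ (δ / 2)) (hq1 : q < 1) :
    IsUnit H.det ∧
      ∀ j i : Fin K, j ≠ i →
        ‖H⁻¹ j i‖ ≤
          M / (m ^ 2 * (1 - q)) * μ ^ ((dist (p j) (p i) + δ) / 2) :=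
  exponential_offdiagonal_decay_of_inverse_general K p δ hδmin μ hμ0 hμ1 M m hM hm H hoff hdiag q hq
    hq1
end
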